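/- arXiv:1607.00906 — 7 statements merged into one kernel-verified Lean document; each statement's English description precedes it below -/
import Mathlib

section
/- For a monoid S, if S is left reversible (any two right ideals of S have nonempty intersection), then a right S-act A is indecomposable if and only if for any a, a' in A there exist s, s' in S such that as = a's'. -/
/-- `act` is a (unital, associative) right `S`-action on `A`. -/
def IsRAct (S : Type*) [Monoid S] {A : Type*} (act : A → S → A) : Prop :=
  (∀ (a : A) (s t : S), act (act a s) t = act a (s * t)) ∧ ∀ a : A, act a 1 = a

/-- `B` is a subact: a nonempty subset closed under the action. -/
def IsSubact {S A : Type*} (act : A → S → A) (B : Set A) : Prop :=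
  B.Nonempty ∧ ∀ a ∈ B, ∀ s : S, act a s ∈ B

/-- An act is indecomposable if it is not the disjoint union of two subacts. -/
def Indecomp {S A : Type*} (act : A → S → A) : Prop :=
  ¬ ∃ B C : Set A, IsSubact act B ∧ IsSubact act C ∧ B ∩ C = ∅ ∧ B ∪ C = Set.univ

/-- `S` is left reversible: any two principal (hence any two) right ideals intersect. -/
def LeftReversible (S : Type*) [Monoid S] : Prop :=
  ∀ a b : S, ∃ u v : S, a * u = b * v

/-- A scheme of length `n ≥ 1` connecting `a` to `b`:
`a = a₁s₁, aᵢtᵢ = aᵢ₊₁sᵢ₊₁ (1 ≤ i < n), aₙtₙ = b` (1-indexed). -/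
def SchemeOfLength {S A : Type*} [Monoid S] (act : A → S → A) (n : ℕ) (a b : A) : Prop :=
  ∃ (c : ℕ → A) (s t : ℕ → S),
    a = act (c 1) (s 1) ∧
    (∀ i, 1 ≤ i → i < n → act (c i) (t i) = act (c (i + 1)) (s (i + 1))) ∧
    act (c n) (t n) = b

/-!
Put `B = {x | aS ∩ xS ≠ ∅}`. Left reversibility makes `B` closed under the action: from
`a s = x s'` and `s' u = t v` we get `a (s u) = (x t) v`. Its complement is closed as well, since a
common multiple of `a` and `x t` is one of `a` and `x`. So `B ∋ a` is a summand of `A`, and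
indecomposability forces `B = A`. Conversely, two elements with a common multiple cannot lie in
disjoint subacts.
-/

theorem indecomp_of_forall_exists_act_eq {S A : Type*} {act : A → S → A}
    (h : ∀ a a' : A, ∃ s s' : S, act a s = act a' s') : Indecomp act := by
  rintro ⟨B, C, ⟨⟨b, hb⟩, hB⟩, ⟨⟨c, hc⟩, hC⟩, hBC, -⟩
  obtain ⟨s, s', hss⟩ := h b c
  have hmem : act b s ∈ B ∩ C := ⟨hB b hb s, hss ▸ hC c hc s'⟩
  simp [hBC] at hmem

theorem Indecomp.eq_univ_of_isSubact {S A : Type*} {act : A → S → A} (hind : Indecomp act)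
    {B : Set A} (hB : IsSubact act B) (hBc : ∀ x ∉ B, ∀ s, act x s ∉ B) : B = Set.univ := by
  by_contra hne
  exact hind ⟨B, Bᶜ, hB, ⟨(Set.ne_univ_iff_exists_notMem B).1 hne, hBc⟩,
    Set.inter_compl_self B, Set.union_compl_self B⟩

def commonMultipleSet {S A : Type*} (act : A → S → A) (a : A) : Set A :=
  {x | ∃ s s' : S, act a s = act x s'}

theorem act_notMem_commonMultipleSet {S A : Type*} [Mul S] {act : A → S → A}
    (hmul : ∀ (x : A) (s t : S), act (act x s) t = act x (s * t)) {a x : A}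
    (hx : x ∉ commonMultipleSet act a) (t : S) : act x t ∉ commonMultipleSet act a := by
  rintro ⟨s, s', hss⟩
  exact hx ⟨s, t * s', by rw [hss, hmul]⟩

theorem isSubact_commonMultipleSet {S A : Type*} [Monoid S] {act : A → S → A}
    (hrev : LeftReversible S) (hmul : ∀ (x : A) (s t : S), act (act x s) t = act x (s * t))
    (a : A) : IsSubact act (commonMultipleSet act a) := by
  refine ⟨⟨a, 1, 1, rfl⟩, ?_⟩
  rintro x ⟨s, s', hss⟩ t
  obtain ⟨u, v, huv⟩ := hrev s' t
  exact ⟨s * u, v, by rw [← hmul, hss, hmul, huv, ← hmul]⟩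

theorem stmt0_general (S : Type*) [Monoid S] (hrev : LeftReversible S)
    (A : Type*) (act : A → S → A) (hact : IsRAct S act) :
    Indecomp act ↔ ∀ a a' : A, ∃ s s' : S, act a s = act a' s' := by
  refine ⟨fun hind a a' => ?_, indecomp_of_forall_exists_act_eq⟩
  have hB : commonMultipleSet act a = Set.univ :=
    hind.eq_univ_of_isSubact (isSubact_commonMultipleSet hrev hact.1 a)
      fun _ hx => act_notMem_commonMultipleSet hact.1 hx
  have ha' : a' ∈ commonMultipleSet act a := hB ▸ Set.mem_univ a'
  exact ha'

theorem stmt0 (S : Type*) [Monoid S] (hrev : LeftReversible S)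
    (A : Type*) [Nonempty A] (act : A → S → A) (hact : IsRAct S act) :
    Indecomp act ↔ ∀ a a' : A, ∃ s s' : S, act a s = act a' s' :=
  stmt0_general S hrev A act hact
end

section
/- For a monoid S that is not left reversible (i.e., there exist a, b ∈ S with aS ∩ bS = ∅), every non-zero cofree right S-act X^S (with |X| ≥ 2) is indecomposable. -/
/-! If `aS ∩ bS = ∅`, any two `f g : S → X` glue to an `h` equal to `f` on `aS` and to `g`
elsewhere. Then `h·a = f·a` and `h·b = g·b`, and since a subact of a decomposition contains every
translate of its elements, `f`, `h` and `g` all lie in the same part. -/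

theorem indecomp_of_forall_exists_translates_eq {S A : Type*} (act : A → S → A)
    (hglue : ∀ f g : A, ∃ (h : A) (s t : S), act h s = act f s ∧ act h t = act g t) :
    Indecomp act := by
  rintro ⟨B, C, ⟨⟨f, hfB⟩, hB⟩, ⟨⟨g, hgC⟩, hC⟩, hdisj, hcover⟩
  obtain ⟨h, s, t, hs, ht⟩ := hglue f g
  have hBC : ∀ x, x ∈ B → x ∈ C → False := fun x hxB hxC =>
    (Set.eq_empty_iff_forall_notMem.mp hdisj) x ⟨hxB, hxC⟩
  rcases (Set.eq_univ_iff_forall.mp hcover h) with hhB | hhC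
  · exact hBC _ (hB h hhB t) (ht ▸ hC g hgC t)
  · exact hBC _ (hs ▸ hB f hfB s) (hC h hhC s)

theorem exists_cofree_translates_eq {S X : Type*} [Monoid S] {a b : S}
    (hab : ∀ u v : S, a * u ≠ b * v) (f g : S → X) :
    ∃ h : S → X, (fun t => h (a * t)) = (fun t => f (a * t)) ∧
      (fun t => h (b * t)) = (fun t => g (b * t)) := by
  classical
  refine ⟨(Set.range (a * ·)).piecewise f g, ?_, ?_⟩
  · funext t
    exact Set.piecewise_eq_of_mem _ _ _ ⟨t, rfl⟩
  · funext t
    exact Set.piecewise_eq_of_notMem _ _ _ fun ⟨u, hu⟩ => hab u t hu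

theorem stmt4_general (S : Type*) [Monoid S] (hrev : ¬ LeftReversible S)
    (X : Type*) :
    Indecomp (fun (f : S → X) (s : S) => fun t => f (s * t)) := by
  simp only [LeftReversible, not_forall, not_exists] at hrev
  obtain ⟨a, b, hab⟩ := hrev
  refine indecomp_of_forall_exists_translates_eq _ fun f g => ?_
  obtain ⟨h, ha, hb⟩ := exists_cofree_translates_eq hab f g
  exact ⟨h, a, b, ha, hb⟩

theorem stmt4 (S : Type*) [Monoid S] (hrev : ¬ LeftReversible S)
    (X : Type*) (x₁ x₂ : X) (hx : x₁ ≠ x₂) :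
    Indecomp (fun (f : S → X) (s : S) => fun t => f (s * t)) :=
  stmt4_general S hrev X
end

section
/- For a left reversible monoid S, every cofree right S-act X^S with |X| ≥ 2 is decomposable. -/
/-!
Fix the zero `z = const x₁`. The elements `f` with `f • w = z` for some `w` form a subact: if
`f • w = z` and `s ∈ S`, left reversibility gives `s u = w v`, so `(f • s) • u = z • v = z`. Their
complement is a subact for any act, since `(f • s) • w = f • (s w)`, and it is nonempty because the
second zero `const x₂` only ever reaches itself.
-/

section TwoZeros

variable {S A : Type*} [Monoid S] {act : A → S → A}

theorem isSubact_setOf_exists_act_eq (hrev : LeftReversible S)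
    (hassoc : ∀ a s t, act (act a s) t = act a (s * t)) {z : A} (hz : ∀ s, act z s = z) :
    IsSubact act {a | ∃ w, act a w = z} := by
  refine ⟨⟨z, 1, hz 1⟩, fun a ⟨w, haw⟩ s => ?_⟩
  obtain ⟨u, v, huv⟩ := hrev s w
  exact ⟨u, by rw [hassoc, huv, ← hassoc, haw, hz]⟩

theorem isSubact_compl_setOf_exists_act_eq (hassoc : ∀ a s t, act (act a s) t = act a (s * t))
    {z z' : A} (hz' : ∀ s, act z' s = z') (hne : z' ≠ z) :
    IsSubact act {a | ∃ w, act a w = z}ᶜ := by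
  refine ⟨⟨z', fun ⟨w, hw⟩ => hne (hz' w ▸ hw)⟩, fun a ha s ⟨w, hw⟩ => ha ⟨s * w, ?_⟩⟩
  rwa [← hassoc]

theorem not_indecomp_of_ne_of_act_eq_self (hrev : LeftReversible S)
    (hassoc : ∀ a s t, act (act a s) t = act a (s * t)) {z z' : A} (hz : ∀ s, act z s = z)
    (hz' : ∀ s, act z' s = z') (hne : z' ≠ z) : ¬ Indecomp act :=
  fun hind => hind ⟨_, _, isSubact_setOf_exists_act_eq hrev hassoc hz,
    isSubact_compl_setOf_exists_act_eq hassoc hz' hne, Set.inter_compl_self _,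
    Set.union_compl_self _⟩

end TwoZeros

theorem stmt5 (S : Type*) [Monoid S] (hrev : LeftReversible S)
    (X : Type*) (x₁ x₂ : X) (hx : x₁ ≠ x₂) :
    ¬ Indecomp (fun (f : S → X) (s : S) => fun t => f (s * t)) :=
  not_indecomp_of_ne_of_act_eq_self (z := fun _ => x₁) (z' := fun _ => x₂) hrev
    (fun f s t => funext fun u => by rw [mul_assoc]) (fun _ => rfl) (fun _ => rfl)
    (fun h => hx (congrFun h 1).symm)
end

section
/- Let S be a monoid, X a right S-act, and f₁ : X → Y₁, f₂ : X → Y₂ homomorphisms of right S-acts with Y₁ and Y₂ indecomposable. Then the pushout Q of (f₁, f₂), realized as (Y₁ ⊔ Y₂)/ν where ν is the congruence generated by all pairs (f₁(x), f₂(x)) for x ∈ X, is indecomposable. -/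
/-!
A subset `B` of an act whose complement is also closed under the action pulls back, along any
homomorphism from an indecomposable act, to `∅` or to everything. Both summands of `Y₁ ⊔ Y₂` map
into the pushout, their images cover it, and the images meet (in the class of `f₁ x = f₂ x` for
any `x ∈ X`); so such a `B` is either empty or everything in the pushout as well.
-/

section Indecomp

variable {S A Q : Type*}

theorem indecomp_iff {act : A → S → A} :
    Indecomp act ↔ ∀ B : Set A, (∀ a ∈ B, ∀ s, act a s ∈ B) → (∀ a ∉ B, ∀ s, act a s ∉ B) →
      B = ∅ ∨ B = Set.univ := by
  constructor
  · intro h B hB hBc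
    by_contra! hne
    exact h ⟨B, Bᶜ, ⟨hne.1, hB⟩, ⟨Set.nonempty_compl.2 hne.2, hBc⟩,
      Set.inter_compl_self B, Set.union_compl_self B⟩
  · rintro h ⟨B, C, ⟨⟨b, hb⟩, hB⟩, ⟨⟨c, hc⟩, hC⟩, hdisj, hunion⟩
    obtain rfl : Bᶜ = C := (IsCompl.of_eq hdisj hunion).compl_eq
    rcases h B hB hC with rfl | rfl
    exacts [hb, hc (Set.mem_univ c)]

theorem Indecomp.preimage_eq_empty_or_eq_univ {act : A → S → A} {actQ : Q → S → Q}
    (hA : Indecomp act) (g : A → Q) (hg : ∀ a s, g (act a s) = actQ (g a) s) {B : Set Q}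
    (hB : ∀ q ∈ B, ∀ s, actQ q s ∈ B) (hBc : ∀ q ∉ B, ∀ s, actQ q s ∉ B) :
    g ⁻¹' B = ∅ ∨ g ⁻¹' B = Set.univ :=
  indecomp_iff.1 hA _ (fun a ha s => by simpa [hg] using hB _ ha s)
    (fun a ha s => by simpa [hg] using hBc _ ha s)

theorem indecomp_of_union_range {Y₁ Y₂ : Type*} {act₁ : Y₁ → S → Y₁} {act₂ : Y₂ → S → Y₂}
    {actQ : Q → S → Q} (hY₁ : Indecomp act₁) (hY₂ : Indecomp act₂) (g₁ : Y₁ → Q) (g₂ : Y₂ → Q)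
    (hg₁ : ∀ y s, g₁ (act₁ y s) = actQ (g₁ y) s) (hg₂ : ∀ y s, g₂ (act₂ y s) = actQ (g₂ y) s)
    (hcover : Set.range g₁ ∪ Set.range g₂ = Set.univ)
    (hmeet : (Set.range g₁ ∩ Set.range g₂).Nonempty) :
    Indecomp actQ := by
  obtain ⟨_, ⟨y₁, rfl⟩, ⟨y₂, hy⟩⟩ := hmeet
  have hcover' : ∀ q, (∃ y, g₁ y = q) ∨ ∃ y, g₂ y = q := fun q => by
    simpa using hcover.ge (Set.mem_univ q)
  refine indecomp_iff.2 fun B hB hBc => ?_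
  rcases hY₁.preimage_eq_empty_or_eq_univ g₁ hg₁ hB hBc with h₁ | h₁ <;>
    rcases hY₂.preimage_eq_empty_or_eq_univ g₂ hg₂ hB hBc with h₂ | h₂ <;>
    simp only [Set.eq_empty_iff_forall_notMem, Set.eq_univ_iff_forall, Set.mem_preimage] at h₁ h₂
  · refine Or.inl (Set.eq_empty_iff_forall_notMem.2 fun q => ?_)
    rcases hcover' q with ⟨y, rfl⟩ | ⟨y, rfl⟩
    exacts [h₁ y, h₂ y]
  · exact absurd (hy ▸ h₂ y₂) (h₁ y₁)
  · exact absurd (hy ▸ h₁ y₁) (h₂ y₂)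
  · refine Or.inr (Set.eq_univ_iff_forall.2 fun q => ?_)
    rcases hcover' q with ⟨y, rfl⟩ | ⟨y, rfl⟩
    exacts [h₁ y, h₂ y]

end Indecomp

theorem stmt7 (S : Type*) [Monoid S] (X Y₁ Y₂ : Type*)
    [Nonempty X]
    (actX : X → S → X) (act₁ : Y₁ → S → Y₁) (act₂ : Y₂ → S → Y₂)
    (f₁ : X → Y₁) (f₂ : X → Y₂)
    (hf₁ : ∀ x s, f₁ (actX x s) = act₁ (f₁ x) s)
    (hf₂ : ∀ x s, f₂ (actX x s) = act₂ (f₂ x) s)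
    (hY₁ : Indecomp act₁) (hY₂ : Indecomp act₂) :
    Indecomp (fun (q : Quot (fun p q : Y₁ ⊕ Y₂ =>
        ∃ x : X, p = Sum.inl (f₁ x) ∧ q = Sum.inr (f₂ x))) (s : S) =>
      Quot.map
        (Sum.elim (fun y => Sum.inl (act₁ y s)) (fun y => Sum.inr (act₂ y s)))
        (fun p q h => by
          obtain ⟨x, rfl, rfl⟩ := h
          exact ⟨actX x s, by simp [hf₁], by simp [hf₂]⟩) q) := by
  refine indecomp_of_union_range hY₁ hY₂ (Quot.mk _ ∘ Sum.inl) (Quot.mk _ ∘ Sum.inr)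
    (fun _ _ => rfl) (fun _ _ => rfl) ?_ ?_
  · refine Set.eq_univ_iff_forall.2 (Quot.ind ?_)
    rintro (y | y)
    exacts [Or.inl ⟨y, rfl⟩, Or.inr ⟨y, rfl⟩]
  · obtain ⟨x⟩ := ‹Nonempty X›
    exact ⟨_, ⟨f₁ x, rfl⟩, ⟨f₂ x, (Quot.sound ⟨x, rfl, rfl⟩).symm⟩⟩
end

section
/- For a monoid S, if S × S is indecomposable as a right S-act, then the product of any two indecomposable right S-acts is indecomposable. -/
/-!
Over a right `S`-act, indecomposability means that any two elements are joined by a chain of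
elementary steps `c s ~ c t`. A step `(c s, b) ~ (c t, b)` in `A × B` is the image of a chain from
`(s, 1)` to `(t, 1)` in the indecomposable act `S × S` under the equivariant map
`(u, v) ↦ (c u, b v)`, and symmetrically for steps in the second coordinate. Moving first the
`A`-coordinate and then the `B`-coordinate connects any two elements of `A × B`.
-/

namespace RightAct

variable {S A B : Type*}

def Step (act : A → S → A) (a b : A) : Prop := ∃ c s t, a = act c s ∧ b = act c t

def Connected (act : A → S → A) : A → A → Prop := Relation.ReflTransGen (Step act)

def prodAct (actA : A → S → A) (actB : B → S → B) (p : A × B) (s : S) : A × B :=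
  (actA p.1 s, actB p.2 s)

theorem isRAct_mul [Monoid S] : IsRAct S fun a s : S => a * s :=
  ⟨mul_assoc, mul_one⟩

theorem IsRAct.prod [Monoid S] {actA : A → S → A} {actB : B → S → B} (hA : IsRAct S actA)
    (hB : IsRAct S actB) : IsRAct S (prodAct actA actB) :=
  ⟨fun p s t => by simp only [prodAct, hA.1, hB.1], fun p => by simp only [prodAct, hA.2, hB.2]⟩

theorem indecomp_of_connected {act : A → S → A} (hc : ∀ a b, Connected act a b) :
    Indecomp act := by
  rintro ⟨X, Y, ⟨⟨x, hx⟩, hXs⟩, ⟨⟨y, hy⟩, hYs⟩, hdisj, hcov⟩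
  have hXY : ∀ a, a ∈ X → a ∉ Y := fun a haX haY =>
    (Set.eq_empty_iff_forall_notMem.1 hdisj) a ⟨haX, haY⟩
  have closed : ∀ a b, Step act a b → a ∈ X → b ∈ X := by
    rintro a b ⟨c, s, t, rfl, rfl⟩ hcs
    rcases (hcov ▸ Set.mem_univ c : c ∈ X ∪ Y) with hc | hc
    · exact hXs c hc t
    · exact absurd (hYs c hc s) (hXY _ hcs)
  have reach : ∀ z, Connected act x z → z ∈ X := fun z hz => by
    induction hz with
    | refl => exact hx
    | tail _ hstep ih => exact closed _ _ hstep ih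
  exact hXY y (reach y (hc x y)) hy

theorem connected_of_indecomp [Monoid S] {act : A → S → A} (h : IsRAct S act)
    (hi : Indecomp act) (a b : A) : Connected act a b := by
  by_contra hab
  refine hi ⟨{x | Connected act a x}, {x | ¬ Connected act a x},
    ⟨⟨a, Relation.ReflTransGen.refl⟩, ?_⟩, ⟨⟨b, hab⟩, ?_⟩, ?_, ?_⟩
  · exact fun x hx s => hx.tail ⟨x, 1, s, (h.2 x).symm, rfl⟩
  · exact fun x hx s hxs => hx (hxs.tail ⟨x, s, 1, rfl, (h.2 x).symm⟩)
  · exact Set.inter_compl_self _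
  · exact Set.union_compl_self _

theorem Connected.map {A' : Type*} {act : A → S → A} {act' : A' → S → A'} (f : A → A')
    (hf : ∀ a s, f (act a s) = act' (f a) s) {a b : A} (hab : Connected act a b) :
    Connected act' (f a) (f b) :=
  hab.lift f fun _ _ ⟨c, s, t, hs, ht⟩ => ⟨f c, s, t, by rw [hs, hf], by rw [ht, hf]⟩

section Product

variable [Monoid S] {actA : A → S → A} {actB : B → S → B}

theorem connected_prodAct_of_mul (hA : IsRAct S actA) (hB : IsRAct S actB)
    (hS : ∀ p q : S × S, Connected (prodAct (· * ·) (· * ·)) p q) (c : A) (d : B)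
    (p q : S × S) :
    Connected (prodAct actA actB) (actA c p.1, actB d p.2) (actA c q.1, actB d q.2) :=
  (hS p q).map (fun u => (actA c u.1, actB d u.2)) fun u s => by
    simp only [prodAct, hA.1, hB.1]

theorem connected_prodAct_fst (hA : IsRAct S actA) (hB : IsRAct S actB)
    (hS : ∀ p q : S × S, Connected (prodAct (· * ·) (· * ·)) p q) (b : B) {x y : A}
    (hxy : Connected actA x y) : Connected (prodAct actA actB) (x, b) (y, b) :=
  hxy.lift' (·, b) fun x' y' ⟨c, s, t, hs, ht⟩ => show Connected _ (x', b) (y', b) by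
    simpa only [← hs, ← ht, hB.2] using connected_prodAct_of_mul hA hB hS c b (s, 1) (t, 1)

theorem connected_prodAct_snd (hA : IsRAct S actA) (hB : IsRAct S actB)
    (hS : ∀ p q : S × S, Connected (prodAct (· * ·) (· * ·)) p q) (a : A) {x y : B}
    (hxy : Connected actB x y) : Connected (prodAct actA actB) (a, x) (a, y) :=
  hxy.lift' (a, ·) fun x' y' ⟨c, s, t, hs, ht⟩ => show Connected _ (a, x') (a, y') by
    simpa only [← hs, ← ht, hA.2] using connected_prodAct_of_mul hA hB hS a c (1, s) (1, t)

end Product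

end RightAct

open RightAct

theorem stmt10_general (S : Type*) [Monoid S]
    (h : Indecomp (fun (p : S × S) (s : S) => (p.1 * s, p.2 * s)))
    (A B : Type*)
    (actA : A → S → A) (actB : B → S → B)
    (hA : IsRAct S actA) (hB : IsRAct S actB)
    (hiA : Indecomp actA) (hiB : Indecomp actB) :
    Indecomp (fun (p : A × B) (s : S) => (actA p.1 s, actB p.2 s)) := by
  have hS := connected_of_indecomp (isRAct_mul.prod isRAct_mul) h
  refine indecomp_of_connected fun p q => ?_
  exact (connected_prodAct_fst hA hB hS p.2 (connected_of_indecomp hA hiA p.1 q.1)).trans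
    (connected_prodAct_snd hA hB hS q.1 (connected_of_indecomp hB hiB p.2 q.2))

theorem stmt10 (S : Type*) [Monoid S]
    (h : Indecomp (fun (p : S × S) (s : S) => (p.1 * s, p.2 * s)))
    (A B : Type*) [Nonempty A] [Nonempty B]
    (actA : A → S → A) (actB : B → S → B)
    (hA : IsRAct S actA) (hB : IsRAct S actB)
    (hiA : Indecomp actA) (hiB : Indecomp actB) :
    Indecomp (fun (p : A × B) (s : S) => (actA p.1 s, actB p.2 s)) :=
  stmt10_general S h A B actA actB hA hB hiA hiB
end

section
/- For a monoid S and natural number n ≥ 2, the product act S^n is indecomposable if and only if S × S is indecomposable. -/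
/-!
A map `f : A → B` commuting with the actions pulls a decomposition of `B` back to a
decomposition of `A`, unless `f` lands entirely in one part. Hence the image of an
indecomposable act meets only one part of any decomposition.

`S^n → S × S`, `g ↦ (g 0, g 1)` is such a map and is surjective, so `S × S` inherits
indecomposability from `S^n`. Conversely, for `g : S^n`, a coordinate `j` and `y : S`, the map
`S × S → S^n` sending `p` to `g · p.1` with the `j`-th entry replaced by `p.2` takes `(1, g j)`
to `g` and `(1, y)` to `g` with its `j`-th entry replaced by `y`. So if `S × S` is
indecomposable, changing one coordinate never leaves a part of a decomposition of `S^n`, and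
every `g` lies in the same part as the constant `1`.
-/

section Decomposition

variable {S A B : Type*} {actA : A → S → A} {actB : B → S → B}

def IsDecomposition (act : A → S → A) (X Y : Set A) : Prop :=
  IsSubact act X ∧ IsSubact act Y ∧ X ∩ Y = ∅ ∧ X ∪ Y = Set.univ

theorem indecomp_iff_s11 {act : A → S → A} : Indecomp act ↔ ∀ X Y, ¬ IsDecomposition act X Y :=
  ⟨fun h X Y hD => h ⟨X, Y, hD⟩, fun h ⟨X, Y, hD⟩ => h X Y hD⟩

theorem IsDecomposition.exists_mem_notMem {X Y : Set A} {act : A → S → A}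
    (hD : IsDecomposition act X Y) : ∃ x y, x ∈ X ∧ y ∉ X := by
  obtain ⟨⟨⟨x, hx⟩, -⟩, ⟨⟨y, hy⟩, -⟩, hd, -⟩ := hD
  exact ⟨x, y, hx, fun hyX => Set.eq_empty_iff_forall_notMem.1 hd y ⟨hyX, hy⟩⟩

theorem IsDecomposition.preimage {X Y : Set B} (hD : IsDecomposition actB X Y) {f : A → B}
    (hf : ∀ a s, f (actA a s) = actB (f a) s) (hX : (f ⁻¹' X).Nonempty)
    (hY : (f ⁻¹' Y).Nonempty) : IsDecomposition actA (f ⁻¹' X) (f ⁻¹' Y) := by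
  obtain ⟨⟨-, hXclosed⟩, ⟨-, hYclosed⟩, hd, hu⟩ := hD
  refine ⟨⟨hX, fun a ha s => ?_⟩, ⟨hY, fun a ha s => ?_⟩, ?_, ?_⟩
  · simpa only [Set.mem_preimage, hf] using hXclosed _ ha s
  · simpa only [Set.mem_preimage, hf] using hYclosed _ ha s
  · rw [← Set.preimage_inter, hd, Set.preimage_empty]
  · rw [← Set.preimage_union, hu, Set.preimage_univ]

theorem Indecomp.apply_mem_of_apply_mem (hA : Indecomp actA) {f : A → B}
    (hf : ∀ a s, f (actA a s) = actB (f a) s) {X Y : Set B} (hD : IsDecomposition actB X Y)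
    {a b : A} (ha : f a ∈ X) : f b ∈ X := by
  by_contra hb
  have hbY : f b ∈ Y := (hD.2.2.2 ▸ Set.mem_univ (f b) : f b ∈ X ∪ Y).resolve_left hb
  exact indecomp_iff_s11.1 hA _ _ (hD.preimage hf ⟨a, ha⟩ ⟨b, hbY⟩)

theorem Indecomp.apply_mem_iff (hA : Indecomp actA) {f : A → B}
    (hf : ∀ a s, f (actA a s) = actB (f a) s) {X Y : Set B} (hD : IsDecomposition actB X Y)
    (a b : A) : f a ∈ X ↔ f b ∈ X :=
  ⟨hA.apply_mem_of_apply_mem hf hD, hA.apply_mem_of_apply_mem hf hD⟩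

theorem Indecomp.of_surjective (hA : Indecomp actA) {f : A → B}
    (hf : ∀ a s, f (actA a s) = actB (f a) s) (hsurj : Function.Surjective f) :
    Indecomp actB := by
  refine indecomp_iff_s11.2 fun X Y hD => ?_
  obtain ⟨x, y, hx, hy⟩ := hD.exists_mem_notMem
  obtain ⟨a, rfl⟩ := hsurj x
  obtain ⟨b, rfl⟩ := hsurj y
  exact hy (hA.apply_mem_of_apply_mem hf hD hx)

end Decomposition

section PowerAct

variable {S ι : Type*}

theorem Indecomp.prod_of_pi [Mul S] {i j : ι} (hij : i ≠ j)
    (h : Indecomp (fun (g : ι → S) (s : S) => fun k => g k * s)) :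
    Indecomp (fun (p : S × S) (s : S) => (p.1 * s, p.2 * s)) := by
  classical
  refine h.of_surjective (f := fun g => (g i, g j)) (fun _ _ => rfl) ?_
  rintro ⟨a, b⟩
  exact ⟨Function.update (fun _ => b) i a, by simp [Function.update_of_ne hij.symm]⟩

theorem Indecomp.update_mem_iff [Monoid S] [DecidableEq ι]
    (h : Indecomp (fun (p : S × S) (s : S) => (p.1 * s, p.2 * s))) {X Y : Set (ι → S)}
    (hD : IsDecomposition (fun g s => fun k => g k * s) X Y) (g : ι → S) (j : ι) (y : S) :
    Function.update g j y ∈ X ↔ g ∈ X := by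
  set f : S × S → ι → S := fun p k => if k = j then p.2 else g k * p.1
  have hf : ∀ (p : S × S) (s : S), f (p.1 * s, p.2 * s) = fun k => f p k * s := by
    intro p s
    funext k
    by_cases hk : k = j <;> simp [f, hk, mul_assoc]
  have hfy : f (1, y) = Function.update g j y := by
    funext k
    by_cases hk : k = j <;> simp [f, hk]
  have hfg : f (1, g j) = g := by
    funext k
    by_cases hk : k = j <;> simp [f, hk]
  rw [← hfy, ← hfg]
  exact h.apply_mem_iff hf hD _ _

theorem Indecomp.pi_of_prod [Monoid S] [Fintype ι] [DecidableEq ι]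
    (h : Indecomp (fun (p : S × S) (s : S) => (p.1 * s, p.2 * s))) :
    Indecomp (fun (g : ι → S) (s : S) => fun k => g k * s) := by
  refine indecomp_iff_s11.2 fun X Y hD => ?_
  have piecewise_mem_iff (g : ι → S) (t : Finset ι) : t.piecewise g 1 ∈ X ↔ 1 ∈ X := by
    induction t using Finset.induction_on with
    | empty => simp
    | insert j t _ ih => rw [Finset.piecewise_insert, h.update_mem_iff hD, ih]
  obtain ⟨x, y, hx, hy⟩ := hD.exists_mem_notMem
  rw [← Finset.piecewise_univ x 1, piecewise_mem_iff] at hx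
  rw [← Finset.piecewise_univ y 1, piecewise_mem_iff] at hy
  exact hy hx

end PowerAct

theorem stmt11 (S : Type*) [Monoid S] (n : ℕ) (hn : 2 ≤ n) :
    Indecomp (fun (g : Fin n → S) (s : S) => fun i => g i * s) ↔
      Indecomp (fun (p : S × S) (s : S) => (p.1 * s, p.2 * s)) :=
  have h01 : (⟨0, by omega⟩ : Fin n) ≠ ⟨1, by omega⟩ := by simp
  ⟨Indecomp.prod_of_pi h01, Indecomp.pi_of_prod⟩
end

section
/- Let S = T_n be the monoid of all functions on the finite set {1,...,n} (n ≥ 2) under composition. Then S × S is an indecomposable right S-act, but S is not left reversible. -/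
/-! Fix points `x ≠ y` and write `cₐ` for the constant map with value `a`, so that `f cₐ = c_{f a}`.
Any two elements `(p₁, p₂)` and `(q₁, q₂)` of `S × S` are linked through a single `(f, g)` with
`f x = p₁ x, f y = q₁ x, g x = p₂ x, g y = q₂ x`: then `(f, g) cₓ = (p₁, p₂) cₓ` and
`(f, g) c_y = (q₁, q₂) cₓ`, so no partition into two subacts can separate them. The maps `cₓ ≠ c_y`
are left zeros of `S`, so `cₓ S ∩ c_y S = ∅`. -/

theorem indecomp_of_forall_exists_common {S A : Type*} (act : A → S → A)
    (h : ∀ a b : A, ∃ (c : A) (s t u v : S), act a u = act c s ∧ act b v = act c t) :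
    Indecomp act := by
  rintro ⟨B, C, ⟨⟨a, ha⟩, hB⟩, ⟨⟨b, hb⟩, hC⟩, hdisj, hunion⟩
  have hBC : Disjoint B C := Set.disjoint_iff_inter_eq_empty.mpr hdisj
  obtain ⟨c, s, t, u, v, hac, hbc⟩ := h a b
  rcases hunion ▸ Set.mem_univ c with hc | hc
  · exact Set.disjoint_left.mp hBC (hbc ▸ hB c hc t) (hC b hb v)
  · exact Set.disjoint_left.mp hBC (hB a ha u) (hac ▸ hC c hc s)

theorem not_leftReversible_of_ne_of_leftZero {S : Type*} [Monoid S] {z w : S}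
    (hz : ∀ s, z * s = z) (hw : ∀ s, w * s = w) (hne : z ≠ w) : ¬ LeftReversible S := by
  intro h
  obtain ⟨u, v, huv⟩ := h z w
  exact hne (by rw [← hz u, ← hw v, huv])

namespace Function.End

variable {α : Type*}

protected def const (a : α) : Function.End α := Function.const α a

theorem mul_const (f : Function.End α) (a : α) : f * Function.End.const a = .const (f a) :=
  rfl

theorem const_mul (a : α) (f : Function.End α) : Function.End.const a * f = .const a :=
  rfl

theorem const_injective [Nonempty α] : Function.Injective (Function.End.const : α → _) :=
  Function.const_injective

theorem indecomp_prod [Nontrivial α] :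
    Indecomp (fun (p : Function.End α × Function.End α) (s : Function.End α) =>
      (p.1 * s, p.2 * s)) := by
  classical
  obtain ⟨x, y, hxy⟩ := exists_pair_ne α
  refine indecomp_of_forall_exists_common _ fun p q => ?_
  let f : Function.End α := Function.update (Function.const α (p.1 x)) y (q.1 x)
  let g : Function.End α := Function.update (Function.const α (p.2 x)) y (q.2 x)
  refine ⟨(f, g), .const x, .const y, .const x, .const x, ?_, ?_⟩
  · simp only [mul_const]
    simp [f, g, hxy]
  · simp only [mul_const]
    simp [f, g]

theorem not_leftReversible [Nontrivial α] : ¬ LeftReversible (Function.End α) := by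
  obtain ⟨x, y, hxy⟩ := exists_pair_ne α
  exact not_leftReversible_of_ne_of_leftZero (const_mul x) (const_mul y)
    (const_injective.ne hxy)

end Function.End

theorem stmt19 (n : ℕ) (hn : 2 ≤ n) :
    Indecomp (fun (p : Function.End (Fin n) × Function.End (Fin n))
        (s : Function.End (Fin n)) => (p.1 * s, p.2 * s)) ∧
      ¬ LeftReversible (Function.End (Fin n)) :=
  have : Nontrivial (Fin n) := Fin.nontrivial_iff_two_le.mpr hn
  ⟨Function.End.indecomp_prod, Function.End.not_leftReversible⟩
end
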